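/- Let E'/E be an extension of algebraically closed fields with transcendence basis {α} (a single element), let K be an infinite subfield of E, and let G be an ordered abelian group. Given finitely many elements s_1, …, s_n of E'(G) ⊆ E'((G)), there exists an E-rational place P of E' sending α and α^{-1} into K such that every coefficient of each s_i lies in the valuation ring O_P, and φ_P(s_i) ∈ E(G) ⊆ E((G)) for each i. -/

import Mathlib

noncomputable section

open HahnSeries Classical

/-- A field is real closed: `-1` is not a square, every element or its negative is a square,
and every polynomial of odd degree has a root. -/
def IsRealClosed' (F : Type*) [Field F] : Prop :=
  (¬ ∃ x : F, x ^ 2 = -1) ∧ (∀ x : F, ∃ y : F, y ^ 2 = x ∨ y ^ 2 = -x) ∧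
    ∀ p : Polynomial F, Odd p.natDegree → ∃ x : F, p.eval x = 0

/-- Applying a map `p : F → F'` (e.g. the residue map of a place) to each coefficient
of a generalized power series; coefficients equal to `0` are sent to `0`. -/
def coeffMap {G : Type*} [PartialOrder G] {F F' : Type*} [Zero F] [Zero F']
    (p : F → F') (f : HahnSeries G F) : HahnSeries G F' where
  coeff g := if f.coeff g = 0 then 0 else p (f.coeff g)
  isPWO_support' := f.isPWO_support'.mono (fun g hg h => by
    simp only [Function.mem_support, h, if_pos] at hg
    exact hg rfl)

variable (F : Type*) [Field F] (G : Type*) [AddCommGroup G] [LinearOrder G] [IsOrderedAddMonoid G]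

/-- The minimal support valuation on the field of generalized power series `F((G))`,
with value `⊤` at `0`. -/
def vmin (f : HahnSeries G F) : WithTop G := f.orderTop

/-- The set of generalized power series all of whose coefficients lie in `S`. -/
def coeffIn (S : Set F) : Set (HahnSeries G F) := {f | ∀ g : G, f.coeff g ∈ S}

/-- For a subfield `E ⊆ F`, the subfield `E(G)` of `F((G))`: the fraction field of the
group ring `E[G]`, i.e. the subfield generated by the monomials with coefficients in `E`. -/
def ratSubfieldOver (E : Subfield F) : Subfield (HahnSeries G F) :=
  Subfield.closure {x | ∃ (g : G) (a : F), a ∈ E ∧ x = HahnSeries.single g a}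

/-- The subfield `F(G)` of rational functions inside `F((G))`. -/
def ratSubfield : Subfield (HahnSeries G F) := ratSubfieldOver F G ⊤

/-- The valuation ideal `I_L` of a subset `L ⊆ F((G))` (w.r.t. the minimal support
valuation). -/
def valIdeal (L : Set (HahnSeries G F)) : Set (HahnSeries G F) :=
  {f ∈ L | 0 < vmin F G f}

/-- The set `U_L = 1 + I_L` of 1-units of a subset `L ⊆ F((G))`. -/
def oneUnits (L : Set (HahnSeries G F)) : Set (HahnSeries G F) :=
  {f ∈ L | 0 < vmin F G (1 - f)}

variable {F G} in
/-- The `K`-linear combination of elements of `F((G))` encoded by a finitely supported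
function `c` with values in the subfield `K`. -/
def lincomb {K : Subfield F} (c : HahnSeries G F →₀ K) : HahnSeries G F :=
  c.sum fun b r => (r : F) • b

/-- `B` is a `K`-valuation basis of the (`K`-subspace) subset `L` of `F((G))`:
it is contained in `L`, every element of `L` is a unique finite `K`-linear combination
of elements of `B`, and every such combination realizes as its value the minimum of the
values of the basis elements occurring in it. -/
def IsValuationBasis (K : Subfield F) (L B : Set (HahnSeries G F)) : Prop :=
  B ⊆ L ∧
    (∀ f ∈ L, ∃! c : HahnSeries G F →₀ K, ↑c.support ⊆ B ∧ f = lincomb c) ∧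
    ∀ c : HahnSeries G F →₀ K, ↑c.support ⊆ B →
      vmin F G (lincomb c) = c.support.inf fun b => vmin F G b

/-- `f = ∏ b^(c b)` where the exponents `c b` are rational numbers: there is a common
positive denominator `d` such that `f ^ d = ∏ b ^ (c b * d)` with integer exponents. -/
def qpowCombo (c : HahnSeries G F →₀ ℚ) (f : HahnSeries G F) : Prop :=
  ∃ d : ℕ, 0 < d ∧ (∀ b ∈ c.support, ((c b) * d).den = 1) ∧
    f ^ d = ∏ b ∈ c.support, b ^ ((c b) * d).num

/-- `B` is a `ℚ`-valuation basis of a subset `L` of the group of `1`-units of `F((G))`,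
with respect to the valuation `w f = v_min (1 - f)`, all operations being multiplicative. -/
def IsMultValuationBasis (L B : Set (HahnSeries G F)) : Prop :=
  B ⊆ L ∧
    (∀ f ∈ L, ∃! c : HahnSeries G F →₀ ℚ, ↑c.support ⊆ B ∧ qpowCombo F G c f) ∧
    ∀ c : HahnSeries G F →₀ ℚ, ↑c.support ⊆ B → ∀ f, qpowCombo F G c f →
      vmin F G (1 - f) = c.support.inf fun b => vmin F G (1 - b)

variable {F} in
/-- An `E`-rational place of `E'` (both subsets of an ambient field `F`): a valuation
subring `dom` of `E'` containing `E`, together with a residue map `res` which is a ring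
homomorphism on `dom`, restricts to the identity on `E`, has image in `E` (so the residue
field is `E`), and whose kernel consists exactly of the nonunits of `dom`. -/
structure RatPlace (E E' : Set F) where
  dom : Subring F
  dom_le : (dom : Set F) ⊆ E'
  res : F → F
  res_one : res 1 = 1
  res_add : ∀ x ∈ dom, ∀ y ∈ dom, res (x + y) = res x + res y
  res_mul : ∀ x ∈ dom, ∀ y ∈ dom, res (x * y) = res x * res y
  res_mem : ∀ x ∈ dom, res x ∈ E
  base_subset : E ⊆ dom
  res_id : ∀ x ∈ E, res x = x
  vring : ∀ x ∈ E', x ∉ dom → x⁻¹ ∈ dom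
  res_unit : ∀ x ∈ dom, res x ≠ 0 → x⁻¹ ∈ dom
  res_nonunit : ∀ x ∈ dom, x ≠ 0 → x⁻¹ ∈ dom → res x ≠ 0

variable {F} in
/-- `{α}` is a transcendence basis of `E'` over `E` (inside the ambient field `F`):
`α ∈ E'` is transcendental over `E` and every element of `E'` is algebraic over `E(α)`. -/
def IsSingleTransBasis (E E' : Subfield F) (α : F) : Prop :=
  α ∈ E' ∧ Transcendental E α ∧
    ∀ x ∈ E', IsAlgebraic (Subfield.closure ((E : Set F) ∪ {α})) x

/-- The transcendence degree reduction property over `K` (for `F` algebraically closed)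
of a subset `L` with `F(G) ⊆ L ⊆ F((G))`:
1. for each countable intermediate field `K ≤ E`, `E((G)) ∩ L` is countable and `L` is
   the union of these sets;
2. for intermediate algebraically closed fields `K ≤ E < E'` with `E'/E` of transcendence
   degree 1, any finitely many elements of `E'((G)) ∩ L` have all coefficients in the
   valuation ring of some `E`-rational place `P` of `E'`, with images under `φ_P` in
   `E((G)) ∩ L`;
3. moreover, for any fixed transcendence basis `{α}` of `E'/E`, the place `P` may be
   chosen to send `α` and `α⁻¹` into `K`. -/
def SatisfiesTDRPAC (K : Subfield F) (L : Set (HahnSeries G F)) : Prop :=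
  (∀ E : Subfield F, K ≤ E → (E : Set F).Countable →
      (coeffIn F G ↑E ∩ L).Countable) ∧
  (∀ f ∈ L, ∃ E : Subfield F, K ≤ E ∧ (E : Set F).Countable ∧ f ∈ coeffIn F G ↑E) ∧
  (∀ E E' : Subfield F, K ≤ E → E < E' → IsAlgClosed E → IsAlgClosed E' →
      (∃ α : F, IsSingleTransBasis E E' α) →
      ∀ (n : ℕ) (s : Fin n → HahnSeries G F),
        (∀ m, s m ∈ coeffIn F G ↑E' ∩ L) →
        ∃ P : RatPlace (E : Set F) (E' : Set F),
          (∀ m, s m ∈ coeffIn F G ↑P.dom) ∧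
          ∀ m, coeffMap P.res (s m) ∈ coeffIn F G ↑E ∩ L) ∧
  (∀ E E' : Subfield F, K ≤ E → E < E' → IsAlgClosed E → IsAlgClosed E' →
      ∀ α : F, IsSingleTransBasis E E' α →
      ∀ (n : ℕ) (s : Fin n → HahnSeries G F),
        (∀ m, s m ∈ coeffIn F G ↑E' ∩ L) →
        ∃ P : RatPlace (E : Set F) (E' : Set F),
          (∀ m, s m ∈ coeffIn F G ↑P.dom) ∧
          (∀ m, coeffMap P.res (s m) ∈ coeffIn F G ↑E ∩ L) ∧
          α ∈ P.dom ∧ α⁻¹ ∈ P.dom ∧ P.res α ∈ K ∧ P.res α⁻¹ ∈ K)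

variable {F} in
/-- The set `L ⊕ √-1·L` inside `F'((G))`, where `φ : F →+* F'` identifies `F` with a
subfield of `F'` and `i ∈ F'` is a square root of `-1`. -/
def complexifySet {F' : Type*} [Field F'] (φ : F →+* F') (i : F')
    (L : Set (HahnSeries G F)) : Set (HahnSeries G F') :=
  {z | ∃ x ∈ L, ∃ y ∈ L,
    z = coeffMap (⇑φ) x + HahnSeries.single (0 : G) i * coeffMap (⇑φ) y}

/-- The transcendence degree reduction property over `K` of `L ⊆ F((G))`, for `F`
algebraically closed or real closed.  In the real closed case it is the requirement that
`L ⊕ √-1·L`, viewed inside `F^a((G))` where `F^a = F(√-1)` is the algebraic closure of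
`F`, satisfies the TDRP over (the image of) `K`. -/
def SatisfiesTDRP (K : Subfield F) (L : Set (HahnSeries G F)) : Prop :=
  (IsAlgClosed F ∧ SatisfiesTDRPAC F G K L) ∨
  (IsRealClosed' F ∧ ∃ i : AlgebraicClosure F, i ^ 2 = -1 ∧
    SatisfiesTDRPAC (AlgebraicClosure F) G
      (K.map (algebraMap F (AlgebraicClosure F)))
      (complexifySet G (algebraMap F (AlgebraicClosure F)) i L))

/-- A transcendence basis `{α_λ}_{λ ∈ I}` of `F` over a subfield `K`: the family is
algebraically independent over `K` and `F` is algebraic over the subfield generated by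
`K` and the `α_λ`. -/
def IsTransBasisFamily {F : Type*} [Field F] (K : Subfield F) {I : Type*} (α : I → F) :
    Prop :=
  AlgebraicIndependent K α ∧
    ∀ x : F, IsAlgebraic (Subfield.closure ((K : Set F) ∪ Set.range α)) x

/-- For a subset `S ⊆ I`, the field `K_S`: the relative algebraic closure in `F` of the
subfield generated by `K` and the transcendence basis elements `α_λ`, `λ ∈ S`. -/
def KXset {F : Type*} [Field F] (K : Subfield F) {I : Type*} (α : I → F) (S : Set I) :
    Set F :=
  {x | IsAlgebraic (Subfield.closure ((K : Set F) ∪ α '' S)) x}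

/-!
Write each `s_i` as `f_i / g_i` with `f_i, g_i` of finite support, so that only finitely many
coefficients `t` occur. Each `t` satisfies a relation `Q_t(α, t) = 0` with `Q_t ∈ E[X][Y]`
primitive, and as `K` is infinite there is `0 ≠ c ∈ K` at which no leading coefficient of a `Q_t`
vanishes. A valuation ring `B` of `E'` dominating the local ring of `E[α]` at `α - c` contains
every `t`, because the leading coefficient of `Q_t(α, Y)` is a unit of `B`; and its residue field
is `E`, because reducing the primitive relation of any `x ∈ B` at `α ↦ c` gives a nonzero
polynomial over the algebraically closed field `E` vanishing at the residue of `x`. The residue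
map of `B` is then an `E`-rational place with `α ↦ c`, and, being a ring homomorphism on series
with coefficients in `B` while the leading coefficients of the `g_i` are units of `B`, it sends
`s_i` to `φ_P(f_i) / φ_P(g_i) ∈ E(G)`.
-/

theorem coeffMap_zero {G F F' : Type*} [PartialOrder G] [Zero F] [Zero F'] (p : F → F') :
    coeffMap p (0 : HahnSeries G F) = 0 := by
  ext; simp [coeffMap]

namespace HahnSeries

variable {Γ R S : Type*}

section OrderedCancel
variable [PartialOrder Γ] [AddCommMonoid Γ] [IsOrderedCancelAddMonoid Γ]
  [Semiring R] [Semiring S]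

def mapRingHom (φ : R →+* S) : HahnSeries Γ R →+* HahnSeries Γ S where
  toFun x := x.map φ
  map_one' := HahnSeries.map_one φ.toMonoidWithZeroHom
  map_mul' _ _ := HahnSeries.map_mul φ.toNonUnitalRingHom
  map_zero' := HahnSeries.map_zero φ.toAddMonoidHom.toZeroHom
  map_add' _ _ := HahnSeries.map_add φ.toAddMonoidHom

theorem mapRingHom_apply (φ : R →+* S) (x : HahnSeries Γ R) : mapRingHom φ x = x.map φ := rfl

theorem leadingCoeff_map_of_injective {φ : R →+* S} (hφ : Function.Injective φ)
    (x : HahnSeries Γ R) : (x.map φ).leadingCoeff = φ x.leadingCoeff := by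
  have hsupp : (x.map φ).support = x.support := by
    ext g; simp [map_eq_zero_iff φ hφ]
  rcases eq_or_ne x 0 with rfl | hx
  · rw [show (0 : HahnSeries Γ R).map φ = 0 from map_zero (mapRingHom φ)]
    simp
  have hx' : x.map φ ≠ 0 := by
    rw [← support_nonempty_iff, hsupp]; exact support_nonempty_iff.2 hx
  simp [leadingCoeff_of_ne_zero, orderTop_of_ne_zero, hx, hx', hsupp]

end OrderedCancel

theorem map_mul_units_inv [AddCommGroup Γ] [LinearOrder Γ] [IsOrderedAddMonoid Γ] [CommRing R]
    {K : Type*} [Field K] (φ : R →+* K) (x : HahnSeries Γ R) (u : (HahnSeries Γ R)ˣ) :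
    (x * ↑u⁻¹).map φ = x.map φ / (u : HahnSeries Γ R).map φ := by
  rw [← mapRingHom_apply, map_mul, map_units_inv, div_eq_mul_inv]
  rfl

end HahnSeries

section CoeffIn
variable {F : Type*} [Field F] {G : Type*} [LinearOrder G] {A : Subring F}

theorem zero_mem_coeffIn : (0 : HahnSeries G F) ∈ coeffIn F G A := fun _ => A.zero_mem

theorem mem_coeffIn_of_image_support_subset {f : HahnSeries G F}
    (h : f.coeff '' f.support ⊆ A) : f ∈ coeffIn F G A := by
  intro g
  by_cases hg : f.coeff g = 0
  · rw [hg]; exact A.zero_mem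
  · exact h ⟨g, hg, rfl⟩

theorem exists_map_subtype_eq {f : HahnSeries G F} (hf : f ∈ coeffIn F G A) :
    ∃ f' : HahnSeries G A, f'.map A.subtype = f :=
  ⟨⟨fun g => ⟨f.coeff g, hf g⟩, f.isPWO_support.mono fun _ hg h => hg (Subtype.ext h)⟩,
    rfl⟩

variable [AddCommGroup G] [IsOrderedAddMonoid G]

theorem exists_units_map_subtype_eq {g : HahnSeries G F} (hg : g ∈ coeffIn F G A)
    (hg0 : g ≠ 0) (hlc : g.leadingCoeff⁻¹ ∈ A) :
    ∃ u : (HahnSeries G A)ˣ, (u : HahnSeries G A).map A.subtype = g := by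
  obtain ⟨g, rfl⟩ := exists_map_subtype_eq hg
  rw [HahnSeries.leadingCoeff_map_of_injective Subtype.val_injective] at hlc
  have hlc0 : (g.leadingCoeff : F) ≠ 0 := by
    rw [Ne, ZeroMemClass.coe_eq_zero, leadingCoeff_eq_zero]
    rintro rfl
    exact hg0 (map_zero (mapRingHom (Γ := G) A.subtype))
  have hu : IsUnit g :=
    isUnit_iff.2 (.of_mul_eq_one ⟨_, hlc⟩ (Subtype.ext (mul_inv_cancel₀ hlc0)))
  exact ⟨hu.unit, rfl⟩

theorem div_mem_coeffIn {f g : HahnSeries G F} (hf : f ∈ coeffIn F G A)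
    (hg : g ∈ coeffIn F G A) (hlc : g.leadingCoeff⁻¹ ∈ A) : f / g ∈ coeffIn F G A := by
  rcases eq_or_ne g 0 with rfl | hg0
  · simpa using zero_mem_coeffIn
  obtain ⟨f, rfl⟩ := exists_map_subtype_eq hf
  obtain ⟨u, rfl⟩ := exists_units_map_subtype_eq hg hg0 hlc
  rw [← map_mul_units_inv]
  exact fun g => SetLike.coe_mem _

theorem mem_ratSubfieldOver_of_support_finite {E : Subfield F} {f : HahnSeries G F}
    (hf : f.support.Finite) (hE : ∀ g, f.coeff g ∈ E) : f ∈ ratSubfieldOver F G E := by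
  have hsum : f = ∑ g ∈ hf.toFinset, single g (f.coeff g) := by
    ext g
    rw [HahnSeries.coeff_sum, Finset.sum_eq_single g (fun b _ hb => by simp [hb.symm])
      (fun hg => by simp_all)]
    simp
  rw [hsum]
  exact Subfield.sum_mem _ fun g _ => Subfield.subset_closure ⟨g, _, hE g, rfl⟩

theorem exists_eq_div_of_mem_ratSubfield {s : HahnSeries G F} (hs : s ∈ ratSubfield F G) :
    ∃ f g : HahnSeries G F, f.support.Finite ∧ g.support.Finite ∧ s = f / g := by
  have : Fact (Cardinal.aleph0 ≤ Cardinal.aleph0) := ⟨le_rfl⟩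
  obtain ⟨f, hf, g, hg, rfl⟩ := Subfield.mem_closure_iff.1 hs
  have hle :
      Subring.closure {x | ∃ (g : G) (a : F), a ∈ (⊤ : Subfield F) ∧ x = single g a} ≤
        cardSuppLTSubring G F Cardinal.aleph0 := by
    refine Subring.closure_le.2 ?_
    rintro _ ⟨g, a, -, rfl⟩
    exact (cardSupp_single_le g a).trans_lt Cardinal.one_lt_aleph0
  exact ⟨f, g, Cardinal.lt_aleph0_iff_set_finite.1 (hle hf),
    Cardinal.lt_aleph0_iff_set_finite.1 (hle hg), rfl⟩

end CoeffIn

namespace RatPlace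

variable {F : Type*} [Field F] {E E' : Set F} (P : RatPlace E E')

theorem res_zero : P.res 0 = 0 := by
  have h := P.res_add 0 P.dom.zero_mem 0 P.dom.zero_mem
  simpa using h

def resHom : P.dom →+* F where
  toFun x := P.res x
  map_one' := P.res_one
  map_mul' x y := P.res_mul x x.2 y y.2
  map_zero' := P.res_zero
  map_add' x y := P.res_add x x.2 y y.2

theorem res_inv {x : F} (hx : x ∈ P.dom) (h : P.res x ≠ 0) : P.res x⁻¹ = (P.res x)⁻¹ := by
  have hx0 : x ≠ 0 := by rintro rfl; exact h P.res_zero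
  refine eq_inv_of_mul_eq_one_right ?_
  rw [← P.res_mul x hx _ (P.res_unit x hx h), mul_inv_cancel₀ hx0, P.res_one]

variable {G : Type*} [LinearOrder G]

theorem coeffMap_map_subtype (f : HahnSeries G P.dom) :
    coeffMap P.res (f.map P.dom.subtype) = f.map P.resHom := by
  ext g
  by_cases h : f.coeff g = 0 <;> simp [coeffMap, h, resHom, res_zero]

variable [AddCommGroup G] [IsOrderedAddMonoid G]

theorem coeffMap_div {f g : HahnSeries G F} (hf : f ∈ coeffIn F G P.dom)
    (hg : g ∈ coeffIn F G P.dom) (hlc : g.leadingCoeff⁻¹ ∈ P.dom) :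
    coeffMap P.res (f / g) = coeffMap P.res f / coeffMap P.res g := by
  rcases eq_or_ne g 0 with rfl | hg0
  · simp [coeffMap_zero]
  obtain ⟨f, rfl⟩ := exists_map_subtype_eq hf
  obtain ⟨u, rfl⟩ := exists_units_map_subtype_eq hg hg0 hlc
  simp only [← map_mul_units_inv, coeffMap_map_subtype]

theorem coeffMap_mem_ratSubfieldOver {E : Subfield F} (P : RatPlace (E : Set F) E')
    {f : HahnSeries G F} (hf : f.support.Finite) (hfP : f ∈ coeffIn F G P.dom) :
    coeffMap P.res f ∈ ratSubfieldOver F G E := by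
  refine mem_ratSubfieldOver_of_support_finite (hf.subset fun g hg h => hg ?_) fun g => ?_
  · simp [coeffMap, h]
  · simp only [coeffMap]
    split_ifs
    exacts [E.zero_mem, P.res_mem _ (hfP g)]

end RatPlace

open Polynomial IsLocalRing

theorem Polynomial.IsPrimitive.map_evalRingHom_ne_zero {K : Type*} [Field K] {Q : K[X][X]}
    (hQ : Q.IsPrimitive) (c : K) : Q.map (evalRingHom c) ≠ 0 := by
  intro h
  refine not_isUnit_X_sub_C c (hQ _ ((C_dvd_iff_dvd_coeff _ _).2 fun i => dvd_iff_isRoot.2 ?_))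
  simpa using congr(($h).coeff i)

section ResidueField
variable {F : Type*} [Field F] {B : ValuationSubring F} {x : F}

theorem ValuationSubring.inv_mem_of_isUnit {hx : x ∈ B} (h : IsUnit (⟨x, hx⟩ : B)) :
    x⁻¹ ∈ B := by
  obtain ⟨u, hu⟩ := h
  obtain rfl : ((u : B) : F) = x := congr(($hu : F))
  rw [inv_eq_of_mul_eq_one_right congr(($(u.mul_inv) : F))]
  exact SetLike.coe_mem _

theorem ValuationSubring.isUnit_of_inv_mem (hx : x ∈ B) (hx0 : x ≠ 0) (h : x⁻¹ ∈ B) :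
    IsUnit (⟨x, hx⟩ : B) :=
  IsUnit.of_mul_eq_one ⟨x⁻¹, h⟩ (Subtype.ext (mul_inv_cancel₀ hx0))

theorem residue_eq_residue_of_sub_mem_nonunits {x y : F} (hx : x ∈ B) (hy : y ∈ B)
    (h : x - y ∈ B.nonunits) : residue B ⟨x, hx⟩ = residue B ⟨y, hy⟩ := by
  rw [← sub_eq_zero, ← map_sub, residue_eq_zero_iff, B.valuation_lt_one_iff]
  exact B.mem_nonunits_iff.1 h

theorem ValuationSubring.mem_of_sub_mem_nonunits {x y : F} (hy : y ∈ B)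
    (h : x - y ∈ B.nonunits) : x ∈ B := by
  simpa using AddMemClass.add_mem (B.nonunits_subset h) hy

variable (B) {E : Subfield F} (hEB : ∀ x : E, (x : F) ∈ B)

def subfieldToResidueField : E →+* ResidueField B :=
  (residue B).comp (E.subtype.codRestrict B hEB)

variable {B hEB} (hσ : Function.Surjective (subfieldToResidueField B hEB))

def residueFieldEquivSubfield : ResidueField B ≃+* E :=
  (RingEquiv.ofBijective _ ⟨(subfieldToResidueField B hEB).injective, hσ⟩).symm

theorem residueFieldEquivSubfield_residue (x : E) :
    residueFieldEquivSubfield hσ (residue B ⟨x, hEB x⟩) = x :=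
  (RingEquiv.ofBijective _ ⟨(subfieldToResidueField B hEB).injective, hσ⟩).symm_apply_apply x

def residueToSubfield : B →+* F :=
  E.subtype.comp ((residueFieldEquivSubfield hσ).toRingHom.comp (residue B))

theorem residueToSubfield_ne_zero_iff (x : B) : residueToSubfield hσ x ≠ 0 ↔ IsUnit x := by
  rw [← residue_ne_zero_iff_isUnit]
  simp [residueToSubfield]

def RatPlace.ofValuationSubring : RatPlace (E : Set F) Set.univ where
  dom := B.toSubring
  dom_le := Set.subset_univ _
  res x := if hx : x ∈ B then residueToSubfield hσ ⟨x, hx⟩ else 0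
  res_one := by simp only [dif_pos B.one_mem]; exact map_one _
  res_add x hx y hy := by
    simp only [dif_pos (show x ∈ B from hx), dif_pos (show y ∈ B from hy),
      dif_pos (show x + y ∈ B from add_mem hx hy)]
    exact map_add _ (⟨x, hx⟩ : B) ⟨y, hy⟩
  res_mul x hx y hy := by
    simp only [dif_pos (show x ∈ B from hx), dif_pos (show y ∈ B from hy),
      dif_pos (show x * y ∈ B from mul_mem hx hy)]
    exact map_mul _ (⟨x, hx⟩ : B) ⟨y, hy⟩
  res_mem x _ := by split_ifs <;> simp [residueToSubfield]
  base_subset x hx := hEB ⟨x, hx⟩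
  res_id x hx := by
    simp [dif_pos (hEB ⟨x, hx⟩), residueToSubfield,
      residueFieldEquivSubfield_residue hσ ⟨x, hx⟩]
  vring x _ hx := (B.mem_or_inv_mem x).resolve_left hx
  res_unit x hx h := by
    rw [dif_pos (show x ∈ B from hx), residueToSubfield_ne_zero_iff] at h
    exact B.inv_mem_of_isUnit h
  res_nonunit x hx hx0 hxinv := by
    rw [dif_pos (show x ∈ B from hx), residueToSubfield_ne_zero_iff]
    exact B.isUnit_of_inv_mem hx hx0 hxinv

theorem RatPlace.ofValuationSubring_res_eq {x : F} {c : E} (h : x - c ∈ B.nonunits) :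
    (RatPlace.ofValuationSubring hσ).res x = c := by
  have hx := B.mem_of_sub_mem_nonunits (hEB c) h
  simp only [RatPlace.ofValuationSubring, dif_pos hx, residueToSubfield, RingHom.comp_apply]
  rw [residue_eq_residue_of_sub_mem_nonunits hx (hEB c) h, RingEquiv.toRingHom_eq_coe,
    RingHom.coe_coe, residueFieldEquivSubfield_residue hσ c]
  rfl

end ResidueField

section Transcendental
variable {F : Type*} [Field F] {E : Subfield F} {α : F}

theorem exists_valuationSubring_sub_mem_nonunits (hα : Transcendental E α) (c : E) :
    ∃ B : ValuationSubring F, (∀ x : E, (x : F) ∈ B) ∧ α - c ∈ B.nonunits := by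
  let e := algEquivOfTranscendental E α hα
  let I : Ideal (Algebra.adjoin E {α}).toSubring :=
    RingHom.ker ((evalRingHom c).comp e.symm.toRingEquiv.toRingHom)
  obtain ⟨B, hAB, hIB⟩ := Ideal.image_subset_nonunits_valuationSubring I (RingHom.ker_ne_top _)
  have hEB (x : E) : (x : F) ∈ B := hAB (Subalgebra.algebraMap_mem _ x)
  have hαc : α - c ∈ B.nonunits :=
    hIB ⟨e (X - Polynomial.C c), by simp [I], by simp [e]; rfl⟩
  exact ⟨B, hEB, hαc⟩

open IntermediateField.algebraAdjoinAdjoin in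
theorem isAlgebraic_adjoin_of_isAlgebraic_closure {x : F}
    (hx : IsAlgebraic (Subfield.closure ((E : Set F) ∪ {α})) x) :
    IsAlgebraic (Algebra.adjoin E {α}) x := by
  have h : Subfield.closure ((E : Set F) ∪ {α}) =
      (IntermediateField.adjoin E {α}).toSubfield := by
    rw [IntermediateField.adjoin_toSubfield]
    congr
    exact Subtype.range_coe.symm
  rw [h] at hx
  exact (IsFractionRing.isAlgebraic_iff _ (IntermediateField.adjoin E {α}) F).2 hx

theorem exists_isPrimitive_eval_map_aeval_eq_zero (hα : Transcendental E α) {x : F}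
    (hx : IsAlgebraic (Subfield.closure ((E : Set F) ∪ {α})) x) :
    ∃ Q : E[X][X], Q.IsPrimitive ∧ (Q.map (aeval α).toRingHom).eval x = 0 := by
  obtain ⟨p, hp0, hpx⟩ := isAlgebraic_adjoin_of_isAlgebraic_closure hx
  set e := Bivariate.Transcendental.algEquivAdjoin hα
  have hp : p =
      (e.symm p).map (aeval ⟨α, Algebra.self_mem_adjoin_singleton E α⟩).toRingHom := by
    conv_lhs => rw [← e.apply_symm_apply p, Bivariate.Transcendental.algEquivAdjoin_apply]
    rfl
  have hα' : (aeval α).toRingHom = (algebraMap (Algebra.adjoin E {α}) F).comp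
      (aeval ⟨α, Algebra.self_mem_adjoin_singleton E α⟩).toRingHom :=
    Polynomial.ringHom_ext (R := E) (fun _ => by simp) (by simp)
  have hQx : ((e.symm p).map (aeval α).toRingHom).eval x = 0 := by
    rw [eval_map, hα', ← eval₂_map, ← hp, ← aeval_def, hpx]
  refine ⟨(e.symm p).primPart, isPrimitive_primPart _, ?_⟩
  rw [eq_C_content_mul_primPart (e.symm p), Polynomial.map_mul, Polynomial.map_C, eval_mul,
    eval_C] at hQx
  exact (mul_eq_zero.1 hQx).resolve_left fun h =>
    hα ⟨_, by simpa [content_eq_zero_iff] using hp0, h⟩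

variable {B : ValuationSubring F}

section AevalToValuationSubring
variable (hEB : ∀ x : E, (x : F) ∈ B) (hαB : α ∈ B)

def aevalToValuationSubring : E[X] →+* B :=
  eval₂RingHom (E.subtype.codRestrict B hEB) ⟨α, hαB⟩

theorem coe_aevalToValuationSubring (p : E[X]) :
    (aevalToValuationSubring hEB hαB p : F) = aeval α p :=
  hom_eval₂ p _ (SubringClass.subtype B) _

theorem eval₂_map_aevalToValuationSubring (Q : E[X][X]) (t : F) :
    (Q.map (aevalToValuationSubring hEB hαB)).eval₂ (algebraMap B F) t =
      (Q.map (aeval α).toRingHom).eval t := by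
  rw [eval_map, eval₂_map]
  congr 1
  exact RingHom.ext (coe_aevalToValuationSubring hEB hαB)

theorem residue_aevalToValuationSubring {c : E} (hαc : α - c ∈ B.nonunits) (p : E[X]) :
    residue B (aevalToValuationSubring hEB hαB p) =
      subfieldToResidueField B hEB (p.eval c) := by
  rw [aevalToValuationSubring, coe_eval₂RingHom, hom_eval₂, ← eval₂_at_apply]
  congr 1
  exact residue_eq_residue_of_sub_mem_nonunits hαB (hEB c) hαc

end AevalToValuationSubring

theorem subfieldToResidueField_surjective [IsAlgClosed E] (hEB : ∀ x : E, (x : F) ∈ B)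
    (hα : Transcendental E α)
    (halg : ∀ x : F, IsAlgebraic (Subfield.closure ((E : Set F) ∪ {α})) x) {c : E}
    (hαc : α - c ∈ B.nonunits) : Function.Surjective (subfieldToResidueField B hEB) := by
  intro y
  have hαB := B.mem_of_sub_mem_nonunits (hEB c) hαc
  obtain ⟨⟨x, hx⟩, rfl⟩ := residue_surjective y
  obtain ⟨Q, hQ, hQx⟩ := exists_isPrimitive_eval_map_aeval_eq_zero hα (halg x)
  have hroot : ((Q.map (evalRingHom c)).map (subfieldToResidueField B hEB)).IsRoot
      (residue B ⟨x, hx⟩) := by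
    have h : (residue B).comp (aevalToValuationSubring hEB hαB) =
        (subfieldToResidueField B hEB).comp (evalRingHom c) :=
      RingHom.ext (residue_aevalToValuationSubring hEB hαB hαc)
    have h' : (Q.map (aevalToValuationSubring hEB hαB)).eval ⟨x, hx⟩ = 0 := by
      apply Subtype.val_injective
      rw [ZeroMemClass.coe_zero, ← hQx, ← eval₂_map_aevalToValuationSubring hEB hαB]
      exact (eval₂_at_apply (algebraMap B F) _).symm
    rw [Polynomial.map_map, ← h, ← Polynomial.map_map, IsRoot, eval_map, eval₂_hom, h',
      map_zero]
  exact (IsAlgClosed.splits _).mem_range_of_isRoot (hQ.map_evalRingHom_ne_zero c) hroot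

theorem mem_of_eval_map_aeval_eq_zero (hEB : ∀ x : E, (x : F) ∈ B) {c : E}
    (hαc : α - c ∈ B.nonunits) {Q : E[X][X]}
    (hQ : Q.leadingCoeff.eval c ≠ 0) {t : F} (ht : (Q.map (aeval α).toRingHom).eval t = 0) :
    t ∈ B := by
  have hαB := B.mem_of_sub_mem_nonunits (hEB c) hαc
  set j := aevalToValuationSubring hEB hαB
  have hu : IsUnit (j Q.leadingCoeff) := by
    rwa [← residue_ne_zero_iff_isUnit, residue_aevalToValuationSubring hEB hαB hαc,
      _root_.map_ne_zero]
  have hlc : (Q.map j).leadingCoeff = j Q.leadingCoeff :=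
    leadingCoeff_map_of_leadingCoeff_ne_zero _ hu.ne_zero
  have hint : IsIntegral B t :=
    ⟨Polynomial.C ↑hu.unit⁻¹ * Q.map j,
      monic_C_mul_of_mul_leadingCoeff_eq_one (by rw [hlc]; exact hu.val_inv_mul),
      by rw [eval₂_mul, eval₂_map_aevalToValuationSubring, ht, mul_zero]⟩
  obtain ⟨y, rfl⟩ := IsIntegrallyClosed.isIntegral_iff.1 hint
  exact y.2

theorem exists_ratPlace_of_finite [IsAlgClosed E] (hα : Transcendental E α)
    (halg : ∀ x : F, IsAlgebraic (Subfield.closure ((E : Set F) ∪ {α})) x) {K : Subfield F}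
    (hKE : K ≤ E) (hKinf : (K : Set F).Infinite) {T : Set F} (hT : T.Finite) :
    ∃ P : RatPlace (E : Set F) Set.univ, T ⊆ P.dom ∧
      α ∈ P.dom ∧ α⁻¹ ∈ P.dom ∧ P.res α ∈ K ∧ P.res α⁻¹ ∈ K := by
  choose Q hQ hQt using fun t : F => exists_isPrimitive_eval_map_aeval_eq_zero hα (halg t)
  set Φ : E[X] := X * ∏ t ∈ hT.toFinset, (Q t).leadingCoeff
  have hΦ : Φ ≠ 0 := mul_ne_zero X_ne_zero
    (Finset.prod_ne_zero_iff.2 fun t _ => leadingCoeff_ne_zero.2 (hQ t).ne_zero)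
  have hKinf' : (((↑) : E → F) ⁻¹' K).Infinite :=
    hKinf.preimage fun x hx => ⟨⟨x, hKE hx⟩, rfl⟩
  obtain ⟨c, hcK, hΦc⟩ := (hKinf'.sdiff (Φ.finite_setOfPred_isRoot hΦ)).nonempty
  simp only [Set.mem_ofPred_eq, IsRoot, Φ, eval_mul, eval_X, eval_prod, mul_ne_zero_iff,
    Finset.prod_ne_zero_iff, Set.Finite.mem_toFinset] at hΦc
  obtain ⟨B, hEB, hαc⟩ := exists_valuationSubring_sub_mem_nonunits hα c
  have hσ := subfieldToResidueField_surjective hEB hα halg hαc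
  set P := RatPlace.ofValuationSubring hσ
  have hPα : P.res α = c := RatPlace.ofValuationSubring_res_eq hσ hαc
  have hαP : α ∈ P.dom := B.mem_of_sub_mem_nonunits (hEB c) hαc
  have hPα0 : P.res α ≠ 0 := by rw [hPα]; exact_mod_cast hΦc.1
  refine ⟨P, fun t ht => mem_of_eval_map_aeval_eq_zero hEB hαc (hΦc.2 t ht) (hQt t), hαP,
    P.res_unit α hαP hPα0, hPα ▸ hcK, ?_⟩
  rw [P.res_inv hαP hPα0, hPα]
  exact K.inv_mem hcK

end Transcendental

theorem place_of_rational_series_general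
    (E' : Type*) [Field E'] (K E : Subfield E') (hKE : K ≤ E)
    (hKinf : (K : Set E').Infinite)
    (hE : IsAlgClosed E)
    (α : E') (hα : IsSingleTransBasis E ⊤ α)
    (G : Type*) [AddCommGroup G] [LinearOrder G] [IsOrderedAddMonoid G]
    (n : ℕ) (s : Fin n → HahnSeries G E') (hs : ∀ m, s m ∈ ratSubfield E' G) :
    ∃ P : RatPlace (E : Set E') (Set.univ : Set E'),
      α ∈ P.dom ∧ α⁻¹ ∈ P.dom ∧ P.res α ∈ K ∧ P.res α⁻¹ ∈ K ∧
      (∀ m, s m ∈ coeffIn E' G ↑P.dom) ∧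
      ∀ m, coeffMap P.res (s m) ∈ ratSubfieldOver E' G E := by
  obtain ⟨-, hαtr, halg⟩ := hα
  choose f g hf hg hs using fun m => exists_eq_div_of_mem_ratSubfield (hs m)
  set T : Set E' := ⋃ m, ((f m).coeff '' (f m).support ∪ (g m).coeff '' (g m).support ∪
    {(g m).leadingCoeff⁻¹})
  have hT : T.Finite := Set.finite_iUnion fun m =>
    (((hf m).image _).union ((hg m).image _)).union (Set.finite_singleton _)
  obtain ⟨P, hTP, hαP, hαinvP, hαK, hαinvK⟩ :=
    exists_ratPlace_of_finite hαtr (fun x => halg x trivial) hKE hKinf hT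
  have hfP (m) : f m ∈ coeffIn E' G P.dom := mem_coeffIn_of_image_support_subset fun t ht =>
    hTP (Set.mem_iUnion.2 ⟨m, .inl (.inl ht)⟩)
  have hgP (m) : g m ∈ coeffIn E' G P.dom := mem_coeffIn_of_image_support_subset fun t ht =>
    hTP (Set.mem_iUnion.2 ⟨m, .inl (.inr ht)⟩)
  have hlcP (m) : (g m).leadingCoeff⁻¹ ∈ P.dom := hTP (Set.mem_iUnion.2 ⟨m, .inr rfl⟩)
  refine ⟨P, hαP, hαinvP, hαK, hαinvK, fun m => ?_, fun m => ?_⟩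
  · rw [hs m]
    exact div_mem_coeffIn (hfP m) (hgP m) (hlcP m)
  · rw [hs m, P.coeffMap_div (hfP m) (hgP m) (hlcP m)]
    exact (ratSubfieldOver E' G E).div_mem (P.coeffMap_mem_ratSubfieldOver (hf m) (hfP m))
      (P.coeffMap_mem_ratSubfieldOver (hg m) (hgP m))

/-- Let `E'/E` be an extension of algebraically closed fields with transcendence basis
`{α}`, `K` an infinite subfield of `E`, and `G` an ordered abelian group.  Given finitely
many `s₁, …, s_n ∈ E'(G) ⊆ E'((G))`, there is an `E`-rational place `P` of `E'` sending
`α, α⁻¹` into `K` such that all coefficients of the `s_i` lie in the valuation ring of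
`P` and `φ_P(s_i) ∈ E(G) ⊆ E((G))` for each `i`. -/
theorem place_of_rational_series
    (E' : Type*) [Field E'] (K E : Subfield E') (hKE : K ≤ E)
    (hKinf : (K : Set E').Infinite)
    (hE : IsAlgClosed E) (hE' : IsAlgClosed E')
    (α : E') (hα : IsSingleTransBasis E ⊤ α)
    (G : Type*) [AddCommGroup G] [LinearOrder G] [IsOrderedAddMonoid G]
    (n : ℕ) (s : Fin n → HahnSeries G E') (hs : ∀ m, s m ∈ ratSubfield E' G) :
    ∃ P : RatPlace (E : Set E') (Set.univ : Set E'),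
      α ∈ P.dom ∧ α⁻¹ ∈ P.dom ∧ P.res α ∈ K ∧ P.res α⁻¹ ∈ K ∧
      (∀ m, s m ∈ coeffIn E' G ↑P.dom) ∧
      ∀ m, coeffMap P.res (s m) ∈ ratSubfieldOver E' G E :=
  place_of_rational_series_general E' K E hKE hKinf hE α hα G n s hs
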